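/- arXiv:2105.11313 — 3 statements merged into one kernel-verified Lean document; each statement's English description precedes it below -/
import Mathlib

section
/- Consider the one-dimensional discrete-time system s_{k+1} = a_k with economic stage cost L(s,a) = -2s^2 + a^2 + s*a + s^2*a^2. There exist no function λ : ℝ → ℝ and constant ρ > 0 such that the strict dissipation inequality λ(a) - λ(s) ≤ -ρ s^2 + L(s,a) holds for all s, a ∈ ℝ; i.e., the system-cost pair is non-dissipative. -/
/-!
Along the steady states `a = s` the storage terms cancel, so dissipativity would force
`ρ s² ≤ L(s, s) = s⁴` for every `s`; this fails for `s² < ρ`.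
-/

theorem mul_sq_le_of_forall_sub_le {lam : ℝ → ℝ} {L : ℝ → ℝ → ℝ} {ρ : ℝ}
    (h : ∀ s a, lam a - lam s ≤ -ρ * s ^ 2 + L s a) (s : ℝ) : ρ * s ^ 2 ≤ L s s := by
  have := h s s
  rw [sub_self] at this
  linarith

theorem exists_pow_four_lt_mul_sq {ρ : ℝ} (hρ : 0 < ρ) : ∃ s : ℝ, s ^ 4 < ρ * s ^ 2 := by
  refine ⟨√(ρ / 2), ?_⟩
  have hsq : √(ρ / 2) ^ 2 = ρ / 2 := Real.sq_sqrt (by positivity)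
  calc √(ρ / 2) ^ 4 = (√(ρ / 2) ^ 2) ^ 2 := by ring
    _ = ρ ^ 2 / 4 := by rw [hsq]; ring
    _ < ρ ^ 2 / 2 := by linarith [pow_pos hρ 2]
    _ = ρ * √(ρ / 2) ^ 2 := by rw [hsq]; ring

/-- Non-dissipativity of the system `s_{k+1} = a_k` with economic stage cost
`L(s,a) = -2s² + a² + sa + s²a²`: there is no storage function `λ` and `ρ > 0`
satisfying the strict dissipation inequality `λ(a) - λ(s) ≤ -ρ s² + L(s,a)`. -/
theorem no_storage_function :
    ¬ ∃ (lam : ℝ → ℝ) (ρ : ℝ), 0 < ρ ∧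
      ∀ s a : ℝ, lam a - lam s ≤ -ρ * s ^ 2 + (-2 * s ^ 2 + a ^ 2 + s * a + s ^ 2 * a ^ 2) := by
  rintro ⟨lam, ρ, hρ, h⟩
  obtain ⟨s, hs⟩ := exists_pow_four_lt_mul_sq hρ
  have hsteady := mul_sq_le_of_forall_sub_le
    (L := fun s a => -2 * s ^ 2 + a ^ 2 + s * a + s ^ 2 * a ^ 2) h s
  have hcost : -2 * s ^ 2 + s ^ 2 + s * s + s ^ 2 * s ^ 2 = s ^ 4 := by ring
  simp only [hcost] at hsteady
  linarith
end

section
/- Consider the linear system s_{k+1} = 2 s_k - a_k with quadratic economic stage cost L(s,a) = s^2 + a^2 + 4 s a. The quadratic function λ(s) = -(4456/10000) s^2 is a valid storage function: for all s, a ∈ ℝ, λ(2s - a) - λ(s) ≤ -s^2 + L(s,a). -/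
/-! For a scalar linear system `s⁺ = A s + B a` with quadratic stage cost and quadratic storage
`λ(s) = P s²`, the dissipation gap `L(s,a) - ρ s² - (λ(s⁺) - λ(s))` is a binary quadratic form
in `(s, a)`. It is nonnegative as soon as its `a²`-coefficient is positive and its discriminant is
nonpositive; for `A = 2`, `B = -1`, `P = -0.4456`, `ρ = 1` this is `1.4456 > 0` and
`2.2176² ≤ 4 · 1.4456 · 1.3368`. -/

theorem binary_quadratic_nonneg {p q r : ℝ} (hp : 0 < p) (hdisc : q ^ 2 ≤ 4 * p * r) (x y : ℝ) :
    0 ≤ p * x ^ 2 + q * x * y + r * y ^ 2 := by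
  have hsq : 4 * p * (p * x ^ 2 + q * x * y + r * y ^ 2) =
      (2 * p * x + q * y) ^ 2 + (4 * p * r - q ^ 2) * y ^ 2 := by ring
  have hmul : 0 ≤ 4 * p * (p * x ^ 2 + q * x * y + r * y ^ 2) := by
    rw [hsq]
    exact add_nonneg (sq_nonneg _) (mul_nonneg (sub_nonneg.2 hdisc) (sq_nonneg _))
  exact nonneg_of_mul_nonneg_right hmul (by positivity)

theorem quadratic_storage_dissipation {A B P Q R S ρ : ℝ} (hR : 0 < R - P * B ^ 2)
    (hdisc : (2 * (S - P * A * B)) ^ 2 ≤ 4 * (R - P * B ^ 2) * (Q - ρ + P - P * A ^ 2))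
    (s a : ℝ) :
    P * (A * s + B * a) ^ 2 - P * s ^ 2 ≤ -ρ * s ^ 2 + (Q * s ^ 2 + R * a ^ 2 + 2 * S * s * a) := by
  linear_combination binary_quadratic_nonneg hR hdisc a s

/-- For the linear system `s_{k+1} = 2s - a` with stage cost `L(s,a) = s² + a² + 4sa`,
the function `λ(s) = -(4456/10000) s²` is a valid storage function with `ρ = 1`:
`λ(2s - a) - λ(s) ≤ -s² + L(s,a)` for all `s, a`. -/
theorem lqr_storage_function :
    ∀ s a : ℝ,
      (-(4456 / 10000) * (2 * s - a) ^ 2) - (-(4456 / 10000) * s ^ 2) ≤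
        -s ^ 2 + (s ^ 2 + a ^ 2 + 4 * s * a) := by
  intro s a
  have h := quadratic_storage_dissipation (A := 2) (B := -1) (P := -(4456 / 10000)) (Q := 1)
    (R := 1) (S := 2) (ρ := 1) (by norm_num) (by norm_num) s a
  linear_combination h
end

section
/- Consider the linear system s_{k+1} = 2 s_k - a_k with quadratic economic stage cost L(s,a) = s^2 + a^2 + 4 s a. For θ ∈ ℝ, the quadratic candidate storage function λ_θ(s) = θ s^2 certifies strict dissipativity — i.e., there exists ρ > 0 such that λ_θ(2s - a) - λ_θ(s) ≤ -ρ s^2 + L(s,a) for all s, a ∈ ℝ — if and only if θ^2 + 12θ + 3 < 0, equivalently -6 - √33 < θ < -6 + √33. -/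
/-!
Rotating the stage cost by the storage function turns the dissipation inequality into
`ρ s² ≤ (1 - 3θ) s² + (4 + 4θ) s a + (1 - θ) a²` for all `s, a`. A binary quadratic form
dominates a positive multiple of `s²` exactly when it is positive definite, i.e. when its
`a²`-coefficient is positive and its discriminant `4 (θ² + 12θ + 3)` is negative; completing
the square, `θ² + 12θ + 3 = (θ + 6)² - 33`, gives the interval.
-/

section QuadraticForm

variable {K : Type*} [Field K] [LinearOrder K] [IsStrictOrderedRing K]

theorem exists_pos_forall_mul_sq_le_iff (p q r : K) :
    (∃ ρ : K, 0 < ρ ∧ ∀ s a : K, ρ * s ^ 2 ≤ p * s ^ 2 + q * s * a + r * a ^ 2) ↔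
      (0 < r ∧ discrim r q p < 0) ∨ (r = 0 ∧ q = 0 ∧ 0 < p) := by
  constructor
  · rintro ⟨ρ, hρ, h⟩
    have hr : 0 ≤ r := by simpa using h 0 1
    rcases hr.lt_or_eq with hr | rfl
    · -- `a = -q s / (2r)` minimises the form in `a`; take `s = 2r` to clear the denominator.
      have hmin := h (2 * r) (-q)
      exact Or.inl ⟨hr, by unfold discrim; nlinarith [mul_pos hρ hr]⟩
    · have hq : q = 0 := by
        by_contra hq
        have := h 1 ((ρ - p - 1) / q)
        simp only [one_pow, mul_one, zero_mul, add_zero, mul_div_cancel₀ _ hq] at this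
        linarith
      exact Or.inr ⟨rfl, hq, by linarith [h 1 0]⟩
  · rintro (⟨hr, hd⟩ | ⟨rfl, rfl, hp⟩)
    · refine ⟨-discrim r q p / (4 * r), div_pos (neg_pos.mpr hd) (by positivity), fun s a => ?_⟩
      rw [div_mul_eq_mul_div, div_le_iff₀ (by positivity)]
      unfold discrim
      nlinarith [sq_nonneg (2 * r * a + q * s)]
    · exact ⟨p, hp, fun s a => by simp⟩

end QuadraticForm

/-- For the linear system `s_{k+1} = 2s - a` with stage cost `L(s,a) = s² + a² + 4sa`,
the candidate storage function `λ_θ(s) = θ s²` certifies strict dissipativity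
(there is `ρ > 0` with `λ_θ(2s-a) - λ_θ(s) ≤ -ρ s² + L(s,a)` for all `s, a`)
if and only if `θ² + 12θ + 3 < 0`, equivalently `-6 - √33 < θ < -6 + √33`. -/
theorem lqr_quadratic_storage_iff (θ : ℝ) :
    ((∃ ρ : ℝ, 0 < ρ ∧
        ∀ s a : ℝ, θ * (2 * s - a) ^ 2 - θ * s ^ 2 ≤
          -ρ * s ^ 2 + (s ^ 2 + a ^ 2 + 4 * s * a)) ↔
      θ ^ 2 + 12 * θ + 3 < 0) ∧
    (θ ^ 2 + 12 * θ + 3 < 0 ↔ -6 - Real.sqrt 33 < θ ∧ θ < -6 + Real.sqrt 33) := by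
  have rotated : ∀ ρ s a : ℝ, θ * (2 * s - a) ^ 2 - θ * s ^ 2 ≤
      -ρ * s ^ 2 + (s ^ 2 + a ^ 2 + 4 * s * a) ↔
      ρ * s ^ 2 ≤ (1 - 3 * θ) * s ^ 2 + (4 + 4 * θ) * s * a + (1 - θ) * a ^ 2 := by
    intro ρ s a
    constructor <;> intro h <;> linarith
  have hdiscrim : discrim (1 - θ) (4 + 4 * θ) (1 - 3 * θ) = 4 * (θ ^ 2 + 12 * θ + 3) := by
    unfold discrim; ring
  have hsquare : θ ^ 2 + 12 * θ + 3 = (θ + 6) ^ 2 - 33 := by ring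
  refine ⟨?_, ?_⟩
  · simp only [rotated, exists_pos_forall_mul_sq_le_iff, hdiscrim]
    constructor
    · rintro (⟨-, h⟩ | ⟨h₁, h₂, -⟩) <;> linarith
    · exact fun h => Or.inl ⟨by nlinarith, by linarith⟩
  · rw [hsquare, sub_neg, Real.sq_lt]
    constructor <;> rintro ⟨h₁, h₂⟩ <;> constructor <;> linarith
end
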